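/- Let P be an irreducible, transient, semi-isotropic transition matrix on the homogeneous tree T_q with Martin kernel K. If (y_n) is a sequence in V_q with up(o,y_n) → ∞ (i.e. y_n converges to the distinguished end ω) such that K(x,y_n) → h(x) pointwise for all x ∈ V_q, then h depends only on the horocycle index: there is a function f : ℤ → [0,∞) with h(x) = f(hor(x)) for all x ∈ V_q, and f is superharmonic for the projected walk on ℤ, i.e. ∑_n μ̃(n) f(m+n) ≤ f(m) for all m ∈ ℤ. -/

import Mathlib

/-!
A semi-isotropic walk is invariant under every automorphism of `T_q` that preserves `up`, i.e.
fixes the end `ω`, and then so is its Green kernel. Two vertices `x, x'` of one horocycle lie in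
a common cone (the descendants of a vertex on the geodesic from `o` to `ω`), and the
automorphism adding the digit difference `x' - x` on that cone and fixing everything else moves
`x` to `x'` while fixing every target outside the cone. As `y_n → ω` the targets leave the cone,
so `K(x, y_n) = K(x', y_n)` eventually and `h(x) = h(x')`.

The kernels `K(·, y)` are superharmonic by the first-step decomposition of `G`, so `h` is
superharmonic by Fatou's lemma. Regrouping `∑_z p(x,z) h(z)` by horocycles and moving `x` to
the root with a level shift `(σ, k) ↦ (σ, k + m)` identifies the horocycle masses of `p(x, ·)`
with `μ̃`.
-/

open Filter Topology ENNReal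

/-! ### Generic Markov chain notions -/

/-- `p` is a transition matrix: nonnegative entries, rows summing to `1`. -/
def IsTransMat {X : Type*} (p : X → X → ℝ) : Prop :=
  (∀ x y, 0 ≤ p x y) ∧ ∀ x, HasSum (fun y => p x y) 1

open Classical in
/-- `n`-step transition probabilities. -/
noncomputable def pstep {X : Type*} (p : X → X → ℝ) : ℕ → X → X → ℝ
  | 0, x, y => if x = y then 1 else 0
  | n + 1, x, y => ∑' z, pstep p n x z * p z y

/-- Irreducibility: any state can be reached from any state. -/
def IsIrredMat {X : Type*} (p : X → X → ℝ) : Prop :=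
  ∀ x y, ∃ n : ℕ, 0 < pstep p n x y

/-- Green kernel, valued in `[0,∞]`. -/
noncomputable def Green {X : Type*} (p : X → X → ℝ) (x y : X) : ℝ≥0∞ :=
  ∑' n : ℕ, ENNReal.ofReal (pstep p n x y)

/-- Transience: the Green kernel is everywhere finite. -/
def IsTransient {X : Type*} (p : X → X → ℝ) : Prop :=
  ∀ x y, Green p x y ≠ ⊤

/-- Martin kernel with respect to a root `o`. -/
noncomputable def Martin {X : Type*} (p : X → X → ℝ) (o x y : X) : ℝ :=
  (Green p x y).toReal / (Green p o y).toReal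

/-- Harmonic function: `∑_y p(x,y) h(y)` converges (absolutely) to `h(x)` for all `x`. -/
def IsHarmonic {X : Type*} (p : X → X → ℝ) (h : X → ℝ) : Prop :=
  ∀ x, HasSum (fun y => p x y * h y) (h x)

/-- Minimal positive harmonic function, normalized at the root `o`. -/
def IsMinimalHarmonic {X : Type*} (p : X → X → ℝ) (o : X) (h : X → ℝ) : Prop :=
  IsHarmonic p h ∧ (∀ x, 0 < h x) ∧ h o = 1 ∧
    ∀ h₁ : X → ℝ, IsHarmonic p h₁ → (∀ x, 0 < h₁ x) → (∀ x, h₁ x ≤ h x) →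
      ∃ c : ℝ, ∀ x, h₁ x = c * h x

/-! ### The homogeneous tree `T_q` -/

/-- Finitely supported configurations `ℕ → ℤ/qℤ`. -/
def Conf (q : ℕ) : Type := {σ : ℕ → ZMod q // (Function.support σ).Finite}

/-- Vertex set of the homogeneous tree `T_q`: `Σ_q × ℤ`. -/
def V (q : ℕ) : Type := Conf q × ℤ

/-- Horocycle index of a vertex. -/
def hor {q : ℕ} (x : V q) : ℤ := x.2

/-- The confluent level `k̄` of two vertices. -/
noncomputable def kbar {q : ℕ} (x y : V q) : ℤ :=
  sSup {ℓ : ℤ | ℓ ≤ min x.2 y.2 ∧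
    ∀ m : ℕ, x.1.1 ((x.2 - ℓ).toNat + m) = y.1.1 ((y.2 - ℓ).toNat + m)}

/-- `up(x,y) = hor(x) - k̄(x,y)`. -/
noncomputable def up {q : ℕ} (x y : V q) : ℤ := x.2 - kbar x y

/-- Graph distance on the tree: `d(x,y) = up(x,y) + up(y,x)`. -/
noncomputable def tdist {q : ℕ} (x y : V q) : ℤ := up x y + up y x

/-- The zero configuration. -/
def zeroConf (q : ℕ) : Conf q :=
  ⟨fun _ => 0, Set.Finite.subset (Set.finite_empty) (by simp [Function.support])⟩

/-- Root vertex `o = (0,0)` of the tree. -/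
def troot (q : ℕ) : V q := (zeroConf q, 0)

/-- Semi-isotropic transition matrix on the tree: `p(x,y)` depends only on
`(up(x,y), up(y,x))`. -/
def SemiIsoTree {q : ℕ} (p : V q → V q → ℝ) : Prop :=
  ∀ x y x' y' : V q, up x y = up x' y' → up y x = up y' x' → p x y = p x' y'

/-- The boundary `∂*T_q`: two-sided sequences vanishing at all sufficiently
small indices. -/
def Bdry (q : ℕ) : Type := {ξ : ℤ → ZMod q // ∃ N : ℤ, ∀ n ≤ N, ξ n = 0}

/-- The confluent level `k̄(x,ξ)` of a vertex and a boundary point. -/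
noncomputable def kbarB {q : ℕ} (x : V q) (ξ : Bdry q) : ℤ :=
  sSup {ℓ : ℤ | ℓ ≤ x.2 ∧ ∀ n : ℤ, n ≤ ℓ → x.1.1 ((x.2 - n).toNat) = ξ.1 n}

/-- `up(x,ξ) = hor(x) - k̄(x,ξ)`. -/
noncomputable def upB {q : ℕ} (x : V q) (ξ : Bdry q) : ℤ := x.2 - kbarB x ξ

/-- A sequence of vertices converges to the boundary point `ξ ∈ ∂*T_q`. -/
def TendsToBdry {q : ℕ} (y : ℕ → V q) (ξ : Bdry q) : Prop :=
  Tendsto (fun n => kbarB (y n) ξ) atTop atTop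

/-- A sequence of vertices converges to the distinguished end `ω`. -/
def TendsToOmega {q : ℕ} (y : ℕ → V q) : Prop :=
  Tendsto (fun n => up (troot q) (y n)) atTop atTop

open Classical in
/-- The projected measure `μ̃` on `ℤ`: `μ̃(n) = ∑_{y : hor(y) = n} p(o,y)`. -/
noncomputable def muTilde {q : ℕ} (p : V q → V q → ℝ) (n : ℤ) : ℝ :=
  ∑' y : V q, if hor y = n then p (troot q) y else 0

section Markov

open Classical

variable {X : Type*} {p : X → X → ℝ}

theorem IsTransMat.le_one (hp : IsTransMat p) (x y : X) : p x y ≤ 1 :=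
  le_hasSum (hp.2 x) y fun z _ => hp.1 x z

theorem IsTransMat.tsum_ofReal (hp : IsTransMat p) (x : X) :
    ∑' y, ENNReal.ofReal (p x y) = 1 := by
  rw [← ENNReal.ofReal_tsum_of_nonneg (hp.1 x) (hp.2 x).summable, (hp.2 x).tsum_eq,
    ENNReal.ofReal_one]

theorem pstep_nonneg (hp : IsTransMat p) : ∀ (n : ℕ) (x y : X), 0 ≤ pstep p n x y
  | 0, x, y => by unfold pstep; positivity
  | n + 1, x, y => tsum_nonneg fun z => mul_nonneg (pstep_nonneg hp n x z) (hp.1 z y)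

theorem ofReal_pstep_zero (x y : X) :
    ENNReal.ofReal (pstep p 0 x y) = if x = y then 1 else 0 := by
  unfold pstep; split_ifs <;> simp

theorem ofReal_pstep_succ_of_summable (hp : IsTransMat p) {n : ℕ} {x : X}
    (hs : Summable (pstep p n x)) (y : X) :
    ENNReal.ofReal (pstep p (n + 1) x y)
      = ∑' z, ENNReal.ofReal (pstep p n x z) * ENNReal.ofReal (p z y) := by
  have hnn z : 0 ≤ pstep p n x z * p z y := mul_nonneg (pstep_nonneg hp n x z) (hp.1 z y)
  have hsy : Summable fun z => pstep p n x z * p z y :=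
    hs.of_nonneg_of_le hnn fun z => mul_le_of_le_one_right (pstep_nonneg hp n x z) (hp.le_one z y)
  simp only [pstep, ENNReal.ofReal_tsum_of_nonneg hnn hsy,
    ENNReal.ofReal_mul (pstep_nonneg hp n x _)]

theorem summable_pstep_and_tsum_eq_one (hp : IsTransMat p) : ∀ (n : ℕ) (x : X),
    Summable (pstep p n x) ∧ ∑' y, ENNReal.ofReal (pstep p n x y) = 1
  | 0, x => by
    refine ⟨summable_of_hasFiniteSupport ((Set.finite_singleton x).subset fun y hy => ?_), ?_⟩
    · by_contra hxy
      simp [pstep, Ne.symm hxy] at hy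
    · simp [ofReal_pstep_zero]
  | n + 1, x => by
    obtain ⟨hs, hone⟩ := summable_pstep_and_tsum_eq_one hp n x
    have hsum : ∑' y, ENNReal.ofReal (pstep p (n + 1) x y) = 1 := by
      simp_rw [ofReal_pstep_succ_of_summable hp hs]
      rw [ENNReal.tsum_comm]
      simp_rw [ENNReal.tsum_mul_left, hp.tsum_ofReal, mul_one, hone]
    refine ⟨?_, hsum⟩
    refine (ENNReal.summable_toReal (hsum ▸ ENNReal.one_ne_top)).congr fun y => ?_
    exact ENNReal.toReal_ofReal (pstep_nonneg hp _ x y)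

theorem ofReal_pstep_succ (hp : IsTransMat p) (n : ℕ) (x y : X) :
    ENNReal.ofReal (pstep p (n + 1) x y)
      = ∑' z, ENNReal.ofReal (pstep p n x z) * ENNReal.ofReal (p z y) :=
  ofReal_pstep_succ_of_summable hp (summable_pstep_and_tsum_eq_one hp n x).1 y

theorem ofReal_pstep_succ' (hp : IsTransMat p) : ∀ (n : ℕ) (x y : X),
    ENNReal.ofReal (pstep p (n + 1) x y)
      = ∑' z, ENNReal.ofReal (p x z) * ENNReal.ofReal (pstep p n z y)
  | 0, x, y => by
    simp [ofReal_pstep_succ hp, ofReal_pstep_zero]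
  | n + 1, x, y => by
    rw [ofReal_pstep_succ hp (n + 1)]
    simp_rw [ofReal_pstep_succ' hp n x, ofReal_pstep_succ hp n _ y, ← ENNReal.tsum_mul_right,
      ← ENNReal.tsum_mul_left, mul_assoc]
    exact ENNReal.tsum_comm

theorem green_eq_add_tsum_mul_green (hp : IsTransMat p) (x w : X) :
    Green p x w = (if x = w then 1 else 0) + ∑' z, ENNReal.ofReal (p x z) * Green p z w := by
  unfold Green
  rw [tsum_eq_zero_add' ENNReal.summable, ofReal_pstep_zero]
  simp_rw [ofReal_pstep_succ' hp, ← ENNReal.tsum_mul_left]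
  rw [ENNReal.tsum_comm]

theorem tsum_ofReal_mul_green_le (hp : IsTransMat p) (x w : X) :
    ∑' z, ENNReal.ofReal (p x z) * Green p z w ≤ Green p x w :=
  green_eq_add_tsum_mul_green hp x w ▸ le_add_self

theorem martin_nonneg (o x w : X) : 0 ≤ Martin p o x w :=
  div_nonneg ENNReal.toReal_nonneg ENNReal.toReal_nonneg

theorem sum_mul_martin_le (hp : IsTransMat p) (htrans : IsTransient p) (o x w : X)
    (F : Finset X) : ∑ z ∈ F, p x z * Martin p o z w ≤ Martin p o x w := by
  have hG : ∑ z ∈ F, p x z * (Green p z w).toReal ≤ (Green p x w).toReal := by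
    calc ∑ z ∈ F, p x z * (Green p z w).toReal
        = (∑ z ∈ F, ENNReal.ofReal (p x z) * Green p z w).toReal := by
          rw [ENNReal.toReal_sum fun z _ => ENNReal.mul_ne_top ENNReal.ofReal_ne_top (htrans z w)]
          simp only [ENNReal.toReal_mul, ENNReal.toReal_ofReal (hp.1 x _)]
      _ ≤ (Green p x w).toReal := ENNReal.toReal_mono (htrans x w)
          ((ENNReal.sum_le_tsum F).trans (tsum_ofReal_mul_green_le hp x w))
  simp only [Martin, mul_div_assoc', ← Finset.sum_div]
  exact div_le_div_of_nonneg_right hG ENNReal.toReal_nonneg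

theorem exists_hasSum_le_of_tendsto_martin (hp : IsTransMat p) (htrans : IsTransient p)
    {o : X} {y : ℕ → X} {h : X → ℝ}
    (hlim : ∀ x, Tendsto (fun n => Martin p o x (y n)) atTop (𝓝 (h x))) (x : X) :
    ∃ s, HasSum (fun z => p x z * h z) s ∧ s ≤ h x := by
  have hnn z : 0 ≤ p x z * h z :=
    mul_nonneg (hp.1 x z) (ge_of_tendsto' (hlim z) fun _ => martin_nonneg _ _ _)
  have hF (F : Finset X) : ∑ z ∈ F, p x z * h z ≤ h x :=
    le_of_tendsto_of_tendsto' (tendsto_finsetSum F fun z _ => (hlim z).const_mul (p x z))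
      (hlim x) fun n => sum_mul_martin_le hp htrans o x (y n) F
  have hs := summable_of_sum_le hnn hF
  exact ⟨_, hs.hasSum, hs.tsum_le_of_sum_le hF⟩

theorem pstep_equiv (g : X ≃ X) (hg : ∀ a b, p (g a) (g b) = p a b) :
    ∀ (n : ℕ) (a b : X), pstep p n (g a) (g b) = pstep p n a b
  | 0, a, b => by simp [pstep, g.apply_eq_iff_eq]
  | n + 1, a, b => by
    rw [pstep, pstep, ← g.tsum_eq]
    simp only [pstep_equiv g hg n, hg]

theorem green_equiv (g : X ≃ X) (hg : ∀ a b, p (g a) (g b) = p a b) (a b : X) :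
    Green p (g a) (g b) = Green p a b := by
  simp only [Green, pstep_equiv g hg]

end Markov

section Digits

variable {q : ℕ}

/-- The digit of `x` at level `n ≤ hor x`; the levels above `x` carry the junk digit `0`. -/
noncomputable def dig (x : V q) (n : ℤ) : ZMod q :=
  if n ≤ x.2 then x.1.1 (x.2 - n).toNat else 0

theorem dig_sub_natCast (x : V q) (j : ℕ) : dig x (x.2 - j) = x.1.1 j := by
  simp [dig]

@[simp]
theorem dig_troot (n : ℤ) : dig (troot q) n = 0 := by
  unfold dig troot zeroConf
  split_ifs <;> rfl

theorem eventually_forall_dig_eq_zero (x : V q) : ∀ᶠ L in atBot, ∀ n ≤ L, dig x n = 0 := by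
  obtain ⟨N, hN⟩ := x.1.2.bddAbove
  filter_upwards [eventually_le_atBot (x.2 - N - 1)] with L hL n hn
  rw [dig, if_pos (by omega)]
  by_contra hne
  have : (x.2 - n).toNat ≤ N := hN hne
  omega

theorem vertex_ext {x y : V q} (h2 : x.2 = y.2) (hd : ∀ n ≤ x.2, dig x n = dig y n) :
    x = y := by
  refine Prod.ext (Subtype.ext (funext fun j => ?_)) h2
  have := hd (x.2 - j) (by omega)
  rwa [dig_sub_natCast, h2, dig_sub_natCast] at this

theorem isGreatest_kbar (x y : V q) :
    IsGreatest {ℓ : ℤ | ℓ ≤ min x.2 y.2 ∧ ∀ n ≤ ℓ, dig x n = dig y n} (kbar x y) := by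
  set S := {ℓ : ℤ | ℓ ≤ min x.2 y.2 ∧ ∀ n ≤ ℓ, dig x n = dig y n}
  have hS : kbar x y = sSup S := by
    refine congrArg sSup (Set.ext fun ℓ => and_congr_right fun hℓ =>
      ⟨fun H n hn => ?_, fun H m => ?_⟩)
    · have := H (ℓ - n).toNat
      rw [dig, dig, if_pos (by omega), if_pos (by omega)]
      convert this using 2 <;> omega
    · have := H (ℓ - m) (by omega)
      rw [dig, dig, if_pos (by omega), if_pos (by omega)] at this
      convert this using 2 <;> omega
  have hne : S.Nonempty := by
    obtain ⟨ℓ, hℓ, hx, hy⟩ := ((eventually_le_atBot (min x.2 y.2)).and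
      ((eventually_forall_dig_eq_zero x).and (eventually_forall_dig_eq_zero y))).exists
    exact ⟨ℓ, hℓ, fun n hn => (hx n hn).trans (hy n hn).symm⟩
  have hbdd : BddAbove S := ⟨min x.2 y.2, fun _ hℓ => hℓ.1⟩
  exact hS ▸ ⟨Int.csSup_mem hne hbdd, fun _ hℓ => le_csSup hbdd hℓ⟩

theorem kbar_map_eq {φ : V q → V q} {m : ℤ} (hlev : ∀ z, (φ z).2 = z.2 + m)
    (hagree : ∀ z z' ℓ, ℓ ≤ min z.2 z'.2 →
      ((∀ n ≤ ℓ + m, dig (φ z) n = dig (φ z') n) ↔ ∀ n ≤ ℓ, dig z n = dig z' n))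
    (z z' : V q) : kbar (φ z) (φ z') = kbar z z' + m := by
  obtain ⟨⟨hle, hag⟩, hmax⟩ := isGreatest_kbar z z'
  refine (isGreatest_kbar (φ z) (φ z')).unique
    ⟨⟨by rw [hlev, hlev]; omega, (hagree z z' _ hle).2 hag⟩, fun ℓ ⟨hℓ, hℓag⟩ => ?_⟩
  rw [hlev, hlev] at hℓ
  have hmem : ℓ - m ≤ min z.2 z'.2 := by omega
  have := hmax ⟨hmem, (hagree z z' _ hmem).1 (by simpa using hℓag)⟩
  omega

theorem up_map_eq {φ : V q → V q} {m : ℤ} (hlev : ∀ z, (φ z).2 = z.2 + m)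
    (hagree : ∀ z z' ℓ, ℓ ≤ min z.2 z'.2 →
      ((∀ n ≤ ℓ + m, dig (φ z) n = dig (φ z') n) ↔ ∀ n ≤ ℓ, dig z n = dig z' n))
    (z z' : V q) : up (φ z) (φ z') = up z z' := by
  rw [up, up, kbar_map_eq hlev hagree, hlev]
  ring

end Digits

section LevelShift

variable {q : ℕ}

/-- The automorphism `(σ, k) ↦ (σ, k + m)` of `T_q`; it fixes the end `ω`. -/
def levelShift (m : ℤ) : V q ≃ V q := Equiv.prodCongr (Equiv.refl (Conf q)) (Equiv.addRight m)

theorem levelShift_snd (m : ℤ) (z : V q) : (levelShift m z).2 = z.2 + m := rfl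

theorem dig_levelShift (m : ℤ) (z : V q) (n : ℤ) : dig (levelShift m z) n = dig z (n - m) := by
  simp only [dig, levelShift_snd, show n ≤ z.2 + m ↔ n - m ≤ z.2 by omega,
    show z.2 + m - n = z.2 - (n - m) by ring]
  rfl

theorem up_levelShift (m : ℤ) (z z' : V q) : up (levelShift m z) (levelShift m z') = up z z' :=
  up_map_eq (levelShift_snd m) (fun z z' ℓ _ => by
    simp only [dig_levelShift]
    exact ⟨fun H n hn => by simpa using H (n + m) (by omega),
      fun H n hn => H (n - m) (by omega)⟩) z z'

end LevelShift

section Cone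

variable {q : ℕ}

/-- The subtree of descendants of the ancestor of `b` at level `L`. -/
def cone (b : V q) (L : ℤ) : Set (V q) := {z | L ≤ z.2 ∧ ∀ n ≤ L, dig z n = dig b n}

/-- `hd` keeps the configuration finitely supported. -/
def addDigits (d : ℤ → ZMod q) {L : ℤ} (hd : ∀ n ≤ L, d n = 0) (z : V q) : V q :=
  (⟨fun j => z.1.1 j + d (z.2 - j), by
    refine (z.1.2.union (Set.finite_Iio (z.2 - L).toNat)).subset
      ((Function.support_add _ _).trans (Set.union_subset_union_right _ fun j hj => ?_))
    by_contra hjL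
    exact hj (hd _ (by simp at hjL; omega))⟩, z.2)

theorem dig_addDigits (d : ℤ → ZMod q) {L : ℤ} (hd : ∀ n ≤ L, d n = 0) (z : V q) {n : ℤ}
    (hn : n ≤ z.2) : dig (addDigits d hd z) n = dig z n + d n := by
  have hn' : n ≤ (addDigits d hd z).2 := hn
  simp only [dig, if_pos hn, if_pos hn']
  show z.1.1 _ + d (z.2 - ((z.2 - n).toNat : ℤ)) = _
  rw [show z.2 - ((z.2 - n).toNat : ℤ) = n by omega]
  rfl

open Classical in
noncomputable def coneShift (b : V q) (L : ℤ) (d : ℤ → ZMod q) (hd : ∀ n ≤ L, d n = 0)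
    (z : V q) : V q :=
  if z ∈ cone b L then addDigits d hd z else z

variable {b : V q} {L : ℤ} {d : ℤ → ZMod q} {hd : ∀ n ≤ L, d n = 0}

theorem coneShift_of_mem {z : V q} (hz : z ∈ cone b L) :
    coneShift b L d hd z = addDigits d hd z := if_pos hz

theorem coneShift_of_notMem {z : V q} (hz : z ∉ cone b L) : coneShift b L d hd z = z :=
  if_neg hz

theorem coneShift_snd (z : V q) : (coneShift b L d hd z).2 = z.2 := by
  unfold coneShift; split_ifs <;> rfl

theorem dig_coneShift_of_le (z : V q) {n : ℤ} (hn : n ≤ L) :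
    dig (coneShift b L d hd z) n = dig z n := by
  by_cases hz : z ∈ cone b L
  · rw [coneShift_of_mem hz, dig_addDigits _ _ _ (hn.trans hz.1), hd n hn, add_zero]
  · rw [coneShift_of_notMem hz]

theorem coneShift_mem_cone_iff (z : V q) : coneShift b L d hd z ∈ cone b L ↔ z ∈ cone b L := by
  simp only [cone, Set.mem_ofPred_eq, coneShift_snd]
  exact and_congr_right fun _ => forall₂_congr fun n hn => by rw [dig_coneShift_of_le z hn]

theorem coneShift_coneShift {d' : ℤ → ZMod q} {hd' : ∀ n ≤ L, d' n = 0} (hdd : d' + d = 0)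
    (z : V q) : coneShift b L d' hd' (coneShift b L d hd z) = z := by
  by_cases hz : z ∈ cone b L
  · rw [coneShift_of_mem ((coneShift_mem_cone_iff z).2 hz), coneShift_of_mem hz]
    refine vertex_ext rfl fun n (hn : n ≤ z.2) => ?_
    rw [dig_addDigits d' hd' (addDigits d hd z) hn, dig_addDigits d hd z hn, add_assoc,
      add_comm (d n), ← Pi.add_apply d' d, hdd, Pi.zero_apply, add_zero]
  · rw [coneShift_of_notMem ((coneShift_mem_cone_iff z).not.2 hz), coneShift_of_notMem hz]

theorem mem_cone_iff_of_agree {z z' : V q} {ℓ : ℤ} (hL : L ≤ ℓ) (hℓ : ℓ ≤ min z.2 z'.2)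
    (hag : ∀ n ≤ ℓ, dig z n = dig z' n) : z ∈ cone b L ↔ z' ∈ cone b L := by
  simp only [cone, Set.mem_ofPred_eq]
  refine and_congr (by omega) (forall₂_congr fun n hn => ?_)
  rw [hag n (hn.trans hL)]

theorem coneShift_agree_iff {z z' : V q} {ℓ : ℤ} (hℓ : ℓ ≤ min z.2 z'.2) :
    (∀ n ≤ ℓ, dig (coneShift b L d hd z) n = dig (coneShift b L d hd z') n) ↔
      ∀ n ≤ ℓ, dig z n = dig z' n := by
  rcases le_or_gt ℓ L with hℓL | hLℓ
  · exact forall₂_congr fun n hn => by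
      rw [dig_coneShift_of_le z (hn.trans hℓL), dig_coneShift_of_le z' (hn.trans hℓL)]
  suffices hsame : (z ∈ cone b L ↔ z' ∈ cone b L) →
      ((∀ n ≤ ℓ, dig (coneShift b L d hd z) n = dig (coneShift b L d hd z') n) ↔
        ∀ n ≤ ℓ, dig z n = dig z' n) by
    refine ⟨fun H => (hsame ?_).1 H, fun H => (hsame (mem_cone_iff_of_agree hLℓ.le hℓ H)).2 H⟩
    rw [← coneShift_mem_cone_iff (d := d) (hd := hd) z,
      ← coneShift_mem_cone_iff (d := d) (hd := hd) z']
    exact mem_cone_iff_of_agree hLℓ.le (by simpa only [coneShift_snd] using hℓ) H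
  intro hzz'
  by_cases hz : z ∈ cone b L
  · rw [coneShift_of_mem hz, coneShift_of_mem (hzz'.1 hz)]
    exact forall₂_congr fun n hn => by
      rw [dig_addDigits _ _ _ (by omega), dig_addDigits _ _ _ (by omega), add_left_inj (d n)]
  · rw [coneShift_of_notMem hz, coneShift_of_notMem (hzz'.not.1 hz)]

theorem up_coneShift (z z' : V q) :
    up (coneShift b L d hd z) (coneShift b L d hd z') = up z z' :=
  up_map_eq (m := 0) (fun z => (coneShift_snd z).trans (add_zero _).symm)
    (fun _ _ _ hℓ => by simpa only [add_zero] using coneShift_agree_iff hℓ) z z'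

noncomputable def coneShiftEquiv (b : V q) (L : ℤ) (d : ℤ → ZMod q) (hd : ∀ n ≤ L, d n = 0) :
    V q ≃ V q where
  toFun := coneShift b L d hd
  invFun := coneShift b L (-d) fun n hn => by simp [hd n hn]
  left_inv := coneShift_coneShift (neg_add_cancel d)
  right_inv := coneShift_coneShift (add_neg_cancel d)

end Cone

section SemiIsotropic

variable {q : ℕ} {p : V q → V q → ℝ}

theorem SemiIsoTree.apply_map_eq (hsi : SemiIsoTree p) {φ : V q → V q}
    (hφ : ∀ a b, up (φ a) (φ b) = up a b) (a b : V q) : p (φ a) (φ b) = p a b :=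
  hsi _ _ a b (hφ a b) (hφ b a)

theorem SemiIsoTree.green_equiv (hsi : SemiIsoTree p) (φ : V q ≃ V q)
    (hφ : ∀ a b, up (φ a) (φ b) = up a b) (a b : V q) : Green p (φ a) (φ b) = Green p a b :=
  _root_.green_equiv φ (hsi.apply_map_eq hφ) a b

theorem SemiIsoTree.green_eq_of_mem_cone (hsi : SemiIsoTree p) {b x x' y : V q} {L : ℤ}
    (hx : x ∈ cone b L) (hx' : x' ∈ cone b L) (hxx' : x.2 = x'.2) (hy : y ∉ cone b L) :
    Green p x y = Green p x' y := by
  have hd : ∀ n ≤ L, dig x' n - dig x n = 0 := fun n hn => by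
    rw [hx.2 n hn, hx'.2 n hn, sub_self]
  set φ := coneShiftEquiv b L _ hd
  have hφx : φ x = x' := by
    refine (coneShift_of_mem hx).trans (vertex_ext hxx' fun n (hn : n ≤ x.2) => ?_)
    rw [dig_addDigits _ hd x hn, add_sub_cancel]
  have hφy : φ y = y := coneShift_of_notMem hy
  rw [← hsi.green_equiv φ up_coneShift, hφx, hφy]

end SemiIsotropic

section Omega

variable {q : ℕ}

theorem eventually_mem_cone_troot (x : V q) : ∀ᶠ L in atBot, x ∈ cone (troot q) L := by
  filter_upwards [eventually_le_atBot x.2, eventually_forall_dig_eq_zero x] with L hL hdig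
  exact ⟨hL, fun n hn => by rw [hdig n hn, dig_troot]⟩

theorem notMem_cone_troot {y : V q} {L : ℤ} (hL : L ≤ 0) (hy : kbar (troot q) y < L) :
    y ∉ cone (troot q) L := fun hmem =>
  hy.not_ge <| (isGreatest_kbar (troot q) y).2
    ⟨le_min hL hmem.1, fun n hn => (hmem.2 n hn).symm⟩

theorem eq_of_hor_eq_of_tendsto_martin {p : V q → V q → ℝ} (hsi : SemiIsoTree p)
    {y : ℕ → V q} (hy : TendsToOmega y) {h : V q → ℝ}
    (hlim : ∀ x, Tendsto (fun n => Martin p (troot q) x (y n)) atTop (𝓝 (h x)))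
    {x x' : V q} (hxx' : hor x = hor x') : h x = h x' := by
  obtain ⟨L, hL0, hx, hx'⟩ := ((eventually_le_atBot 0).and
    ((eventually_mem_cone_troot x).and (eventually_mem_cone_troot x'))).exists
  have hfar : ∀ᶠ n in atTop, y n ∉ cone (troot q) L := by
    filter_upwards [hy.eventually_gt_atTop (-L)] with n hn
    refine notMem_cone_troot hL0 ?_
    rw [up, show (troot q).2 = 0 from rfl] at hn
    omega
  refine tendsto_nhds_unique (hlim x) ((hlim x').congr' ?_)
  filter_upwards [hfar] with n hn
  simp only [Martin, hsi.green_eq_of_mem_cone hx hx' hxx' hn]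

theorem hor_levelShift_troot (m : ℤ) : hor (levelShift m (troot q)) = m := zero_add m

theorem tsum_fiber_eq_muTilde {p : V q → V q → ℝ} (hsi : SemiIsoTree p) (m n : ℤ) :
    ∑' z : hor ⁻¹' {m + n}, p (levelShift m (troot q)) z.1 = muTilde p n := by
  let e : (hor (q := q)) ⁻¹' {n} ≃ (hor (q := q)) ⁻¹' {m + n} :=
    (levelShift m).subtypeEquiv fun z => by
      simp only [Set.mem_preimage, Set.mem_singleton_iff, hor, levelShift_snd]
      omega
  rw [← e.tsum_eq]
  calc ∑' z, p (levelShift m (troot q)) (e z).1 = ∑' z : hor ⁻¹' {n}, p (troot q) z.1 :=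
        tsum_congr fun z => hsi.apply_map_eq (up_levelShift m) _ _
    _ = muTilde p n := by
        rw [tsum_subtype, muTilde]
        refine tsum_congr fun z => ?_
        classical
        simp only [Set.indicator_apply, Set.mem_preimage, Set.mem_singleton_iff]

theorem hasSum_muTilde_mul {p : V q → V q → ℝ} (hsi : SemiIsoTree p) (m : ℤ) {f : ℤ → ℝ}
    {s : ℝ} (hs : HasSum (fun z => p (levelShift m (troot q)) z * f (hor z)) s) :
    HasSum (fun n => muTilde p n * f (m + n)) s := by
  have hfib : HasSum (fun k => (∑' z : hor ⁻¹' {k}, p (levelShift m (troot q)) z.1) * f k) s := by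
    refine (hs.tsum_fiberwise hor).congr_fun fun k => ?_
    rw [← tsum_mul_right]
    exact tsum_congr fun z => by rw [z.2]
  refine ((Equiv.addLeft m).hasSum_iff.2 hfib).congr_fun fun n => ?_
  simp only [Function.comp_apply, Equiv.coe_addLeft, tsum_fiber_eq_muTilde hsi]

end Omega

theorem martin_limit_at_omega_general (q : ℕ)
    (p : V q → V q → ℝ) (hp : IsTransMat p)
    (htrans : IsTransient p) (hsi : SemiIsoTree p)
    (y : ℕ → V q) (hy : TendsToOmega y) (h : V q → ℝ)
    (hlim : ∀ x : V q,
      Tendsto (fun n => Martin p (troot q) x (y n)) atTop (nhds (h x))) :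
    ∃ f : ℤ → ℝ, (∀ m, 0 ≤ f m) ∧ (∀ x : V q, h x = f (hor x)) ∧
      ∀ m : ℤ, ∃ s : ℝ,
        HasSum (fun n : ℤ => muTilde p n * f (m + n)) s ∧ s ≤ f m := by
  have hhor (x : V q) : h x = h (levelShift (hor x) (troot q)) :=
    eq_of_hor_eq_of_tendsto_martin hsi hy hlim (hor_levelShift_troot _).symm
  refine ⟨fun m => h (levelShift m (troot q)),
    fun m => ge_of_tendsto' (hlim _) fun _ => martin_nonneg _ _ _, hhor, fun m => ?_⟩
  obtain ⟨s, hs, hle⟩ := exists_hasSum_le_of_tendsto_martin hp htrans hlim (levelShift m (troot q))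
  refine ⟨s, hasSum_muTilde_mul hsi m (f := fun m => h (levelShift m (troot q))) ?_, hle⟩
  refine hs.congr_fun fun z => ?_
  rw [← hhor z]

/-- If the Martin kernels of an irreducible, transient,
semi-isotropic walk on `T_q` converge pointwise to `h` along a sequence tending
to the distinguished end `ω`, then `h(x) = f(hor(x))` for a nonnegative function
`f` on `ℤ` which is superharmonic for the projected walk. -/
theorem martin_limit_at_omega (q : ℕ) (hq : 2 ≤ q)
    (p : V q → V q → ℝ) (hp : IsTransMat p)
    (hirr : IsIrredMat p) (htrans : IsTransient p) (hsi : SemiIsoTree p)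
    (y : ℕ → V q) (hy : TendsToOmega y) (h : V q → ℝ)
    (hlim : ∀ x : V q,
      Tendsto (fun n => Martin p (troot q) x (y n)) atTop (nhds (h x))) :
    ∃ f : ℤ → ℝ, (∀ m, 0 ≤ f m) ∧ (∀ x : V q, h x = f (hor x)) ∧
      ∀ m : ℤ, ∃ s : ℝ,
        HasSum (fun n : ℤ => muTilde p n * f (m + n)) s ∧ s ≤ f m :=
  martin_limit_at_omega_general q p hp htrans hsi y hy h hlim
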